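/- For every α ∈ [0,1) and λ > 2, the function F₂(λ,α) := 1 + 2α + (1-α)²/(λ-α) - ((2α-λ) + √((2α-λ)² - 4(1-α)²))/2 satisfies ∂F₂/∂λ < 0, i.e., λ ↦ F₂(λ,α) is strictly decreasing on (2,∞). -/

import Mathlib

/-!
The derivative in `l` is `-(1-α)²/(l-α)² + 1/2 + (2α-l)/(2√((2α-l)² - 4(1-α)²))`. Its first
term is negative, and so is the sum of the last two, because the square root is smaller than
`|2α-l| = l-2α`. A negative derivative on the interval `(2, ∞)` makes the function strictly
decreasing there.
-/

open Real

noncomputable def F₂ (α l : ℝ) : ℝ :=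
  1 + 2*α + (1-α)^2/(l - α) - ((2*α - l) + √((2*α - l)^2 - 4*(1-α)^2))/2

lemma one_half_add_div_two_sqrt_neg {a c : ℝ} (ha : a < 0) (hc : 0 < c) (hca : c < a^2) :
    1/2 + a / (2 * √(a^2 - c)) < 0 := by
  have hs : 0 < √(a^2 - c) := sqrt_pos.mpr (by linarith)
  have hsa : √(a^2 - c) < -a := by
    rw [sqrt_lt' (by linarith)]
    linarith
  have : a / (2 * √(a^2 - c)) < -1/2 := by
    rw [div_lt_iff₀ (by positivity)]
    linarith
  linarith

lemma hasDerivAt_F₂ {α l : ℝ} (hl : l ≠ α) (hD : (2*α - l)^2 - 4*(1-α)^2 ≠ 0) :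
    HasDerivAt (F₂ α)
      (-((1-α)^2/(l - α)^2) + 1/2 + (2*α - l) / (2 * √((2*α - l)^2 - 4*(1-α)^2))) l := by
  have hlin : HasDerivAt (fun x : ℝ => 2*α - x) (-1) l := by
    simpa using (hasDerivAt_id l).const_sub (2*α)
  have hfrac : HasDerivAt (fun x : ℝ => (1-α)^2 / (x - α)) (-((1-α)^2/(l - α)^2)) l := by
    simpa [div_eq_mul_inv, neg_div] using
      (((hasDerivAt_id l).sub_const α).inv (sub_ne_zero.mpr hl)).const_mul ((1-α)^2)
  have hquad : HasDerivAt (fun x : ℝ => (2*α - x)^2 - 4*(1-α)^2) (-2 * (2*α - l)) l := by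
    refine ((hlin.fun_pow 2).sub_const (4*(1-α)^2)).congr_deriv ?_
    norm_num
  refine ((hfrac.const_add (1 + 2*α)).sub ((hlin.add (hquad.sqrt hD)).div_const 2)).congr_deriv ?_
  field_simp
  ring

lemma F₂_discriminant_pos {α l : ℝ} (hα : α < 1) (hl : 2 < l) :
    0 < (2*α - l)^2 - 4*(1-α)^2 := by
  nlinarith

lemma hasDerivAt_F₂_of_two_lt {α l : ℝ} (hα : α < 1) (hl : 2 < l) :
    HasDerivAt (F₂ α)
      (-((1-α)^2/(l - α)^2) + 1/2 + (2*α - l) / (2 * √((2*α - l)^2 - 4*(1-α)^2))) l :=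
  hasDerivAt_F₂ (by linarith) (F₂_discriminant_pos hα hl).ne'

lemma deriv_F₂_neg {α l : ℝ} (hα : α < 1) (hl : 2 < l) : deriv (F₂ α) l < 0 := by
  rw [(hasDerivAt_F₂_of_two_lt hα hl).deriv]
  have hfrac : 0 < (1-α)^2/(l - α)^2 := by
    have : 0 < 1 - α := by linarith
    have : 0 < l - α := by linarith
    positivity
  have := one_half_add_div_two_sqrt_neg (a := 2*α - l) (c := 4*(1-α)^2)
    (by linarith) (by nlinarith) (by linarith [F₂_discriminant_pos hα hl])
  linarith

theorem stmt_11 (α : ℝ) (hα : α ∈ Set.Ico (0:ℝ) 1) :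
    (∀ l : ℝ, 2 < l →
      deriv (fun l : ℝ => 1 + 2*α + (1-α)^2/(l - α) -
        ((2*α - l) + Real.sqrt ((2*α - l)^2 - 4*(1-α)^2))/2) l < 0) ∧
    StrictAntiOn
      (fun l : ℝ => 1 + 2*α + (1-α)^2/(l - α) -
        ((2*α - l) + Real.sqrt ((2*α - l)^2 - 4*(1-α)^2))/2)
      (Set.Ioi 2) := by
  have hderiv : ∀ l : ℝ, 2 < l → deriv (F₂ α) l < 0 := fun l hl => deriv_F₂_neg hα.2 hl
  refine ⟨hderiv, strictAntiOn_of_deriv_neg (convex_Ioi 2) ?_ (by rwa [interior_Ioi])⟩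
  exact fun l hl => (hasDerivAt_F₂_of_two_lt hα.2 hl).continuousAt.continuousWithinAt
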